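/- Let T ≥ 0 and z ∈ ℂ with Re z > 0, and define g(t) = Σ_{n=1}^∞ ((−1)^n T^n / n!) · (t^{n/2−1} / Γ(n/2)) for t > 0 (the series converges absolutely). Then t ↦ g(t) e^{−zt} is integrable on (0,∞) and ∫_0^∞ g(t) e^{−zt} dt = e^{−T/√z} − 1, where √z denotes the principal branch of the square root. -/

import Mathlib

/-!
Each term of `g` is a multiple of `t^{a-1}/Γ(a)` with `a = n/2`, whose Laplace transform is
`z^{-a}`; termwise the series therefore transforms into
`Σ_{n≥1} (-T/√z)^n / n! = e^{-T/√z} - 1`. Integrating termwise is legitimate because the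
integrals of the absolute values of the terms add up to `e^{T/√(Re z)} - 1 < ∞`. The Laplace
transform of `t^{a-1}` at complex `z` is obtained from the real case by analytic continuation
in `z`.
-/

open MeasureTheory Set Filter Topology
open scoped Complex

theorem integrable_tsum_of_summable_integral_norm {α E ι : Type*} [MeasurableSpace α]
    {μ : Measure α} [NormedAddCommGroup E] [CompleteSpace E] [Countable ι] {F : ι → α → E}
    (hF_int : ∀ i, Integrable (F i) μ) (hF_sum : Summable fun i ↦ ∫ a, ‖F i a‖ ∂μ) :
    Integrable (fun a ↦ ∑' i, F i a) μ := by
  -- The series of `L¹` classes converges, and its sum is a.e. the pointwise sum.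
  have hL1 : ∑' i, ‖(hF_int i).toL1 (F i)‖ₑ ≠ ⊤ := by
    rw [tsum_enorm_ne_top_iff_summable_norm]
    simpa only [L1.norm_of_fun_eq_integral_norm] using hF_sum
  refine (L1.integrable_coeFn (∑' i, (hF_int i).toL1 (F i))).congr ?_
  filter_upwards [Lp.coeFn_tsum hL1, ae_all_iff.2 fun i ↦ (hF_int i).coeFn_toL1] with a hsum hF
  rw [hsum]
  exact tsum_congr hF

lemma norm_cpow_mul_cexp_neg_mul (a z : ℂ) {t : ℝ} (ht : 0 < t) :
    ‖(t : ℂ) ^ (a - 1) * cexp (-z * t)‖ = t ^ (a.re - 1) * Real.exp (-(z.re * t)) := by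
  simp [Complex.norm_exp, Complex.norm_cpow_eq_rpow_re_of_pos ht]

lemma integrableOn_rpow_mul_exp_neg_mul {a r : ℝ} (ha : 0 < a) (hr : 0 < r) :
    IntegrableOn (fun t : ℝ ↦ t ^ (a - 1) * Real.exp (-(r * t))) (Ioi 0) := by
  simpa using integrableOn_rpow_mul_exp_neg_mul_rpow (p := 1) (s := a - 1) (by linarith) one_pos hr

lemma integrableOn_cpow_mul_cexp_neg_mul {a z : ℂ} (ha : 0 < a.re) (hz : 0 < z.re) :
    IntegrableOn (fun t : ℝ ↦ (t : ℂ) ^ (a - 1) * cexp (-z * t)) (Ioi 0) := by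
  refine (integrableOn_rpow_mul_exp_neg_mul ha hz).mono'
    (by fun_prop : Measurable _).aestronglyMeasurable ?_
  filter_upwards [ae_restrict_mem measurableSet_Ioi] with t ht
  exact (norm_cpow_mul_cexp_neg_mul a z ht).le

lemma differentiableOn_integral_cpow_mul_cexp_neg_mul {a : ℂ} (ha : 0 < a.re) :
    DifferentiableOn ℂ (fun z : ℂ ↦ ∫ t in Ioi (0 : ℝ), (t : ℂ) ^ (a - 1) * cexp (-z * t))
      {z | 0 < z.re} := by
  intro z₀ (hz₀ : 0 < z₀.re)
  have hε : 0 < z₀.re / 2 := by positivity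
  have hs : {w : ℂ | z₀.re / 2 < w.re} ∈ 𝓝 z₀ :=
    (isOpen_lt continuous_const Complex.continuous_re).mem_nhds (by simp; linarith)
  have h_bound : ∀ᵐ t : ℝ ∂volume.restrict (Ioi 0), ∀ w ∈ {w : ℂ | z₀.re / 2 < w.re},
      ‖(t : ℂ) ^ (a - 1) * cexp (-w * t) * -t‖
        ≤ t ^ (a.re + 1 - 1) * Real.exp (-(z₀.re / 2 * t)) := by
    filter_upwards [ae_restrict_mem measurableSet_Ioi] with t (ht : 0 < t) w (hw : _ < w.re)
    rw [norm_mul, norm_cpow_mul_cexp_neg_mul a w ht, norm_neg, Complex.norm_real,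
      Real.norm_of_nonneg ht.le, add_sub_cancel_right, mul_right_comm,
      ← Real.rpow_add_one ht.ne', sub_add_cancel]
    gcongr
  have h_diff : ∀ᵐ t : ℝ ∂volume.restrict (Ioi 0), ∀ w ∈ {w : ℂ | z₀.re / 2 < w.re},
      HasDerivAt (fun w : ℂ ↦ (t : ℂ) ^ (a - 1) * cexp (-w * t))
        ((t : ℂ) ^ (a - 1) * cexp (-w * t) * -t) w := .of_forall fun t w _ ↦ by
    simpa [mul_assoc] using
      (((hasDerivAt_id w).neg.mul_const (t : ℂ)).cexp).const_mul ((t : ℂ) ^ (a - 1))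
  exact (hasDerivAt_integral_of_dominated_loc_of_deriv_le (μ := volume.restrict (Ioi (0 : ℝ)))
    (F := fun w (t : ℝ) ↦ (t : ℂ) ^ (a - 1) * cexp (-w * t)) hs
    (.of_forall fun w ↦ (by fun_prop : Measurable _).aestronglyMeasurable)
    (integrableOn_cpow_mul_cexp_neg_mul ha hz₀) (by fun_prop : Measurable _).aestronglyMeasurable
    h_bound (integrableOn_rpow_mul_exp_neg_mul (by linarith) hε)
    h_diff).2.differentiableAt.differentiableWithinAt

theorem integral_cpow_mul_cexp_neg_mul_Ioi {a z : ℂ} (ha : 0 < a.re) (hz : 0 < z.re) :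
    ∫ t in Ioi (0 : ℝ), (t : ℂ) ^ (a - 1) * cexp (-z * t) = Complex.Gamma a / z ^ a := by
  have hU : IsOpen {w : ℂ | 0 < w.re} := isOpen_lt continuous_const Complex.continuous_re
  have hGamma : DifferentiableOn ℂ (fun w : ℂ ↦ Complex.Gamma a / w ^ a) {w | 0 < w.re} :=
    fun w (hw : 0 < w.re) ↦ ((differentiableAt_const _).div
      (differentiableAt_id.cpow_const (Or.inl hw))
      (by simp [Complex.cpow_eq_zero_iff, Complex.ne_zero_of_re_pos hw])).differentiableWithinAt
  have h_real (r : ℝ) (hr : 0 < r) :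
      ∫ t in Ioi (0 : ℝ), (t : ℂ) ^ (a - 1) * cexp (-r * t) = Complex.Gamma a / r ^ a := by
    have h_arg : (r : ℂ).arg ≠ Real.pi := by
      rw [Complex.arg_ofReal_of_nonneg hr.le]
      exact Real.pi_ne_zero.symm
    simp_rw [neg_mul, Complex.integral_cpow_mul_exp_neg_mul_Ioi ha hr, one_div,
      Complex.inv_cpow _ _ h_arg]
    ring
  have h_freq : ∃ᶠ w in 𝓝[≠] (1 : ℂ), ∫ t in Ioi (0 : ℝ), (t : ℂ) ^ (a - 1) * cexp (-w * t)
      = Complex.Gamma a / w ^ a := by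
    have h_ofReal : Tendsto ((↑) : ℝ → ℂ) (𝓝[≠] 1) (𝓝[≠] 1) :=
      Complex.continuous_ofReal.continuousWithinAt.tendsto_nhdsWithin
        fun r hr ↦ by simpa using hr
    refine h_ofReal.frequently (Eventually.frequently ?_)
    filter_upwards [nhdsWithin_le_nhds (lt_mem_nhds one_pos)] with r hr using h_real r hr
  exact ((differentiableOn_integral_cpow_mul_cexp_neg_mul ha).analyticOnNhd hU)
    |>.eqOn_of_preconnected_of_frequently_eq (hGamma.analyticOnNhd hU)
      (convex_halfSpace_re_gt 0).isPreconnected (by simp) h_freq hz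

theorem hasSum_integral_tsum_cpow_mul_cexp_neg_mul {ι : Type*} [Countable ι] {c a : ι → ℂ}
    (ha : ∀ i, 0 < (a i).re) {z : ℂ} (hz : 0 < z.re)
    (h_sum : Summable fun i ↦ ‖c i‖ * Real.Gamma (a i).re / z.re ^ (a i).re) :
    IntegrableOn (fun t : ℝ ↦ (∑' i, c i * (t : ℂ) ^ (a i - 1)) * cexp (-z * t)) (Ioi 0) ∧
      HasSum (fun i ↦ c i * Complex.Gamma (a i) / z ^ a i)
        (∫ t in Ioi (0 : ℝ), (∑' i, c i * (t : ℂ) ^ (a i - 1)) * cexp (-z * t)) := by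
  set F : ι → ℝ → ℂ := fun i t ↦ c i * ((t : ℂ) ^ (a i - 1) * cexp (-z * t))
  have hF_tsum : (fun t : ℝ ↦ (∑' i, c i * (t : ℂ) ^ (a i - 1)) * cexp (-z * t))
      = fun t ↦ ∑' i, F i t := by
    simp only [F, ← tsum_mul_right, mul_assoc]
  have hF_int (i : ι) : Integrable (F i) (volume.restrict (Ioi 0)) :=
    (integrableOn_cpow_mul_cexp_neg_mul (ha i) hz).const_mul _
  have hF_norm (i : ι) :
      ∫ t in Ioi (0 : ℝ), ‖F i t‖ = ‖c i‖ * Real.Gamma (a i).re / z.re ^ (a i).re := by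
    calc ∫ t in Ioi (0 : ℝ), ‖F i t‖
        = ∫ t in Ioi (0 : ℝ), ‖c i‖ * (t ^ ((a i).re - 1) * Real.exp (-(z.re * t))) :=
          setIntegral_congr_fun measurableSet_Ioi fun t ht ↦ by
            simp only [F, norm_mul (c i), norm_cpow_mul_cexp_neg_mul _ _ ht]
      _ = ‖c i‖ * Real.Gamma (a i).re / z.re ^ (a i).re := by
          rw [integral_const_mul, Real.integral_rpow_mul_exp_neg_mul_Ioi (ha i) hz,
            Real.div_rpow zero_le_one hz.le, Real.one_rpow]
          ring
  have h_sum' : Summable fun i ↦ ∫ t in Ioi (0 : ℝ), ‖F i t‖ := by simpa only [hF_norm]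
  rw [hF_tsum]
  refine ⟨integrable_tsum_of_summable_integral_norm hF_int h_sum', ?_⟩
  have hF_integral (i : ι) :
      ∫ t in Ioi (0 : ℝ), F i t = c i * Complex.Gamma (a i) / z ^ a i := by
    rw [integral_const_mul, integral_cpow_mul_cexp_neg_mul_Ioi (ha i) hz, mul_div_assoc]
  simpa only [hF_integral] using hasSum_integral_of_summable_integral_norm hF_int h_sum'

lemma Complex.hasSum_pow_succ_div_factorial_succ (w : ℂ) :
    HasSum (fun n : ℕ ↦ w ^ (n + 1) / (n + 1).factorial) (cexp w - 1) := by
  simpa [Complex.exp_eq_exp_ℂ] using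
    (hasSum_nat_add_iff' 1).mpr (NormedSpace.expSeries_div_hasSum_exp w)

lemma Real.rpow_succ_div_two {x : ℝ} (hx : 0 ≤ x) (n : ℕ) :
    x ^ (((n : ℝ) + 1) / 2) = √x ^ (n + 1) := by
  rw [Real.sqrt_eq_rpow, ← Real.rpow_natCast, ← Real.rpow_mul hx]
  push_cast
  ring_nf

lemma Complex.cpow_succ_div_two (z : ℂ) (n : ℕ) :
    z ^ (((n : ℂ) + 1) / 2) = (z ^ (1 / 2 : ℂ)) ^ (n + 1) := by
  rw [← Complex.cpow_nat_mul]
  push_cast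
  ring_nf

/-- The coefficient of `t ^ ((n + 1) / 2 - 1)` in the series `g` (its `(n + 1)`-st term). -/
noncomputable def halfPowerCoeff (T : ℝ) (n : ℕ) : ℂ :=
  (-T : ℂ) ^ (n + 1) / (n + 1).factorial / Real.Gamma (((n : ℝ) + 1) / 2)

lemma norm_halfPowerCoeff_mul_Gamma_div_rpow {T x : ℝ} (hT : 0 ≤ T) (hx : 0 < x) (n : ℕ) :
    ‖halfPowerCoeff T n‖ * Real.Gamma (((n : ℝ) + 1) / 2) / x ^ (((n : ℝ) + 1) / 2)
      = (T / √x) ^ (n + 1) / (n + 1).factorial := by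
  have hΓ := (Real.Gamma_pos_of_pos (by positivity : (0 : ℝ) < ((n : ℝ) + 1) / 2))
  simp only [halfPowerCoeff, Real.rpow_succ_div_two hx.le, div_pow, norm_div, norm_pow, norm_neg,
    Complex.norm_real, Complex.norm_natCast, Real.norm_of_nonneg hT, Real.norm_of_nonneg hΓ.le]
  field_simp

lemma halfPowerCoeff_mul_Gamma_div_cpow (T : ℝ) {z : ℂ} (hz : z ≠ 0) (n : ℕ) :
    halfPowerCoeff T n * Complex.Gamma (((n : ℝ) + 1) / 2 : ℝ)
        / z ^ ((((n : ℝ) + 1) / 2 : ℝ) : ℂ)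
      = (-T / z ^ (1 / 2 : ℂ)) ^ (n + 1) / (n + 1).factorial := by
  have hΓ : (Real.Gamma (((n : ℝ) + 1) / 2) : ℂ) ≠ 0 := by
    exact_mod_cast (Real.Gamma_pos_of_pos (by positivity : (0 : ℝ) < ((n : ℝ) + 1) / 2)).ne'
  have h_root : z ^ (1 / 2 : ℂ) ≠ 0 := by simp [Complex.cpow_eq_zero_iff, hz]
  rw [Complex.Gamma_ofReal, div_pow]
  push_cast
  rw [Complex.cpow_succ_div_two, halfPowerCoeff]
  field_simp

/-- **Inverse Laplace transform of `e^{−T/√z} − 1`** (Lemma 17 in Appendix C of the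
paper). For `T ≥ 0`, `Re z > 0`, and
`g(t) = Σ_{n≥1} ((−1)^n T^n / n!) t^{n/2−1} / Γ(n/2)`, the function `t ↦ g(t) e^{−zt}` is
integrable on `(0,∞)` and its integral equals `e^{−T/√z} − 1`, with the principal branch
of the square root. -/
theorem laplace_transform_half_power_series (T : ℝ) (hT : 0 ≤ T)
    (z : ℂ) (hz : 0 < z.re)
    (g : ℝ → ℝ)
    (hg : ∀ t ∈ Set.Ioi (0 : ℝ), g t = ∑' n : ℕ,
      (-1 : ℝ) ^ (n + 1) * T ^ (n + 1) / (Nat.factorial (n + 1)) *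
        (t ^ (((n : ℝ) + 1) / 2 - 1) / Real.Gamma (((n : ℝ) + 1) / 2))) :
    IntegrableOn (fun t : ℝ => (g t : ℂ) * Complex.exp (-z * t)) (Set.Ioi 0) ∧
    ∫ t in Set.Ioi (0 : ℝ), (g t : ℂ) * Complex.exp (-z * t)
      = Complex.exp (-(T : ℂ) / z ^ (1 / 2 : ℂ)) - 1 := by
  set a : ℕ → ℂ := fun n ↦ (((n : ℝ) + 1) / 2 : ℝ)
  have hg_series : EqOn (fun t : ℝ ↦ (g t : ℂ) * cexp (-z * t))
      (fun t ↦ (∑' n, halfPowerCoeff T n * (t : ℂ) ^ (a n - 1)) * cexp (-z * t)) (Ioi 0) := by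
    intro t ht
    simp only [hg t ht, Complex.ofReal_tsum]
    congr 2 with n
    push_cast [a, halfPowerCoeff, Complex.ofReal_cpow ht.le]
    ring
  have h_sum :
      Summable fun n ↦ ‖halfPowerCoeff T n‖ * Real.Gamma (a n).re / z.re ^ (a n).re := by
    simpa only [a, Complex.ofReal_re, norm_halfPowerCoeff_mul_Gamma_div_rpow hT hz] using
      (summable_nat_add_iff 1).mpr (Real.summable_pow_div_factorial _)
  obtain ⟨h_int, h_hasSum⟩ :=
    hasSum_integral_tsum_cpow_mul_cexp_neg_mul
      (fun n ↦ by simp only [a, Complex.ofReal_re]; positivity) hz h_sum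
  refine ⟨h_int.congr_fun hg_series.symm measurableSet_Ioi, ?_⟩
  rw [setIntegral_congr_fun measurableSet_Ioi hg_series]
  refine h_hasSum.unique ?_
  simpa only [a, halfPowerCoeff_mul_Gamma_div_cpow T (Complex.ne_zero_of_re_pos hz)] using
    Complex.hasSum_pow_succ_div_factorial_succ _
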